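/- arXiv:2510.08748 — 4 statements merged into one kernel-verified Lean document; each statement's English description precedes it below -/
import Mathlib

section
/- Let N be a positive integer, let Λ ⊂ ℝ be a nonempty closed bounded set with minimum λ_min, and let L_1, ..., L_{N+1} be exchangeable random functions from Λ to ℝ that are almost surely left-continuous and nondecreasing in λ. Let B : Λ → ℝ be a (deterministic) left-continuous nondecreasing function such that for each i ∈ {1,...,N+1}, with probability one L_i(λ) ≤ B(λ) for all λ ∈ Λ, and assume all relevant expectations exist. Fix α ∈ ℝ and define h(λ) := (1/(N+1)) (B(λ) + Σ_{i=1}^N L_i(λ)) and the random set Λ̂ := {λ ∈ Λ : h(λ) ≤ α}. Then for any measurable random variable λ̂ taking values in Λ such that λ̂ ∈ Λ̂ almost surely, it holds that E[L_{N+1}(λ̂)] ≤ α. -/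
open MeasureTheory Set

open Filter Topology


noncomputable section CRCAux

def crcPhi (n : ℕ) (c m : ℝ) (e : ℕ → ℝ) (k : ℕ) (f : Fin n → ℝ → ℝ) : ℝ :=
  if (∑ i, f i (e k)) ≤ c then e k else m

def crcPsi (n : ℕ) (c m : ℝ) (e : ℕ → ℝ) : ℕ → (Fin n → ℝ → ℝ) → ℝ
  | 0 => crcPhi n c m e 0
  | (k+1) => fun f => max (crcPsi n c m e k f) (crcPhi n c m e (k+1) f)

def crcSet (n : ℕ) (c m : ℝ) (e : ℕ → ℝ) (f : Fin n → ℝ → ℝ) : Set ℝ :=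
  {d | d ∈ Set.range e ∧ (∑ i, f i d) ≤ c} ∪ {m}

def crcG (n : ℕ) (c m : ℝ) (e : ℕ → ℝ) (f : Fin n → ℝ → ℝ) : ℝ :=
  sSup (crcSet n c m e f)

def crcPsiStar (n : ℕ) (c m : ℝ) (e : ℕ → ℝ) (j : Fin n) (f : Fin n → ℝ → ℝ) : ℝ :=
  Filter.limsup (fun k => f j (crcPsi n c m e k f)) Filter.atTop

variable {n : ℕ}

lemma crcPhi_measurable (c m : ℝ) (e : ℕ → ℝ) (k : ℕ) :
    Measurable (crcPhi n c m e k) := by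
  unfold crcPhi
  refine Measurable.ite ?_ measurable_const measurable_const
  exact measurableSet_le (Finset.measurable_sum _ fun i _ =>
    (measurable_pi_apply (e k)).comp (measurable_pi_apply i)) measurable_const

lemma crcPsi_measurable (c m : ℝ) (e : ℕ → ℝ) (k : ℕ) :
    Measurable (crcPsi n c m e k) := by
  induction k with
  | zero => exact crcPhi_measurable c m e 0
  | succ k ih => exact ih.max (crcPhi_measurable c m e (k+1))

lemma crcPhi_mem_finset (c m : ℝ) (e : ℕ → ℝ) (k : ℕ) (f : Fin n → ℝ → ℝ) :
    crcPhi n c m e k f ∈ insert m ((Finset.range (k+1)).image e) := by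
  unfold crcPhi
  split
  · exact Finset.mem_insert_of_mem
      (Finset.mem_image.2 ⟨k, Finset.self_mem_range_succ k, rfl⟩)
  · exact Finset.mem_insert_self _ _

lemma crcPsi_mem_finset (c m : ℝ) (e : ℕ → ℝ) (k : ℕ) (f : Fin n → ℝ → ℝ) :
    crcPsi n c m e k f ∈ insert m ((Finset.range (k+1)).image e) := by
  induction k with
  | zero => exact crcPhi_mem_finset c m e 0 f
  | succ k ih =>
    have hsub : insert m ((Finset.range (k+1)).image e)
        ⊆ insert m ((Finset.range (k+2)).image e) :=
      Finset.insert_subset_insert _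
        (Finset.image_subset_image (Finset.range_subset_range.2 (Nat.le_succ _)))
    show max (crcPsi n c m e k f) (crcPhi n c m e (k+1) f) ∈ _
    rcases max_choice (crcPsi n c m e k f) (crcPhi n c m e (k+1) f) with hh | hh
    · rw [hh]; exact hsub ih
    · rw [hh]; exact crcPhi_mem_finset c m e (k+1) f

lemma crc_eval_measurable {α : Type*} [MeasurableSpace α]
    (F : α → ℝ → ℝ) (hF : ∀ r : ℝ, Measurable fun a => F a r)
    (ρ : α → ℝ) (hρ : Measurable ρ) (V : Finset ℝ) (hV : ∀ a, ρ a ∈ V) :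
    Measurable fun a => F a (ρ a) := by
  have heq : (fun a => F a (ρ a)) = fun a => ∑ v ∈ V, if ρ a = v then F a v else 0 := by
    funext a
    rw [Finset.sum_ite_eq V (ρ a) fun v => F a v, if_pos (hV a)]
  rw [heq]
  exact Finset.measurable_sum _ fun v _ =>
    Measurable.ite (hρ (measurableSet_singleton v)) (hF v) measurable_const

lemma crc_eval_psi_measurable (c m : ℝ) (e : ℕ → ℝ) (j : Fin n) (k : ℕ) :
    Measurable fun f : Fin n → ℝ → ℝ => f j (crcPsi n c m e k f) :=
  crc_eval_measurable (fun f r => f j r)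
    (fun r => (measurable_pi_apply r).comp (measurable_pi_apply j))
    _ (crcPsi_measurable c m e k) _ (crcPsi_mem_finset c m e k)

lemma crcPsiStar_measurable (c m : ℝ) (e : ℕ → ℝ) (j : Fin n) :
    Measurable (crcPsiStar n c m e j) :=
  Measurable.limsup fun k => crc_eval_psi_measurable c m e j k

lemma crcSet_comp (c m : ℝ) (e : ℕ → ℝ) (σ : Equiv.Perm (Fin n)) (f : Fin n → ℝ → ℝ) :
    crcSet n c m e (fun i => f (σ i)) = crcSet n c m e f := by
  unfold crcSet
  ext d
  simp only [mem_union, mem_setOf_eq, mem_singleton_iff]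
  rw [Equiv.sum_comp σ (fun i => f i d)]

lemma crcG_comp (c m : ℝ) (e : ℕ → ℝ) (σ : Equiv.Perm (Fin n)) (f : Fin n → ℝ → ℝ) :
    crcG n c m e (fun i => f (σ i)) = crcG n c m e f := by
  unfold crcG
  rw [crcSet_comp]

end CRCAux

lemma crc_core (n : ℕ) (Λ : Set ℝ) (hcl : IsClosed Λ) (hbdd : BddAbove Λ)
    (m : ℝ) (hMin : IsLeast Λ m)
    (e : ℕ → ℝ) (he : Set.range e ⊆ Λ)
    (hD2 : ∀ x ∈ Λ, ∀ ε > (0:ℝ), ∃ d ∈ Set.range e, d ∈ Λ ∧ x - ε < d ∧ d ≤ x)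
    (c : ℝ) (f : Fin n → ℝ → ℝ)
    (hmono : ∀ i, MonotoneOn (f i) Λ)
    (hlc : ∀ i, ∀ lam ∈ Λ, ContinuousWithinAt (f i) (Λ ∩ Iic lam) lam)
    (x : ℝ) (hx : x ∈ Λ) (hxc : (∑ i, f i x) ≤ c) :
    x ≤ crcG n c m e f ∧ crcG n c m e f ∈ Λ ∧ (∑ i, f i (crcG n c m e f)) ≤ c ∧
      ∀ j, crcPsiStar n c m e j f = f j (crcG n c m e f) := by
  set S := crcSet n c m e f with hSdef
  set s := crcG n c m e f with hsdef
  have hSΛ : S ⊆ Λ := by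
    rintro d (⟨hd, -⟩ | rfl)
    · exact he hd
    · exact hMin.1
  have hSne : S.Nonempty := ⟨m, Or.inr rfl⟩
  have hSbdd : BddAbove S := hbdd.mono hSΛ
  have hmem_le : ∀ t ∈ S, t ≤ s := fun t ht => le_csSup hSbdd ht
  have hxs : x ≤ s := by
    refine le_of_forall_pos_le_add fun ε hε => ?_
    obtain ⟨d, hde, hdΛ, hd1, hd2⟩ := hD2 x hx ε hε
    have hdc : (∑ i, f i d) ≤ c :=
      le_trans (Finset.sum_le_sum fun i _ => hmono i hdΛ hx hd2) hxc
    have hdS : d ∈ S := Or.inl ⟨hde, hdc⟩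
    linarith [hmem_le d hdS]
  have hsΛ : s ∈ Λ :=
    hcl.closure_subset ((closure_mono hSΛ) (csSup_mem_closure hSne hSbdd))
  have hφS : ∀ k, crcPhi n c m e k f ∈ S := by
    intro k
    unfold crcPhi
    split
    · rename_i hcond
      exact Or.inl ⟨⟨k, rfl⟩, hcond⟩
    · exact Or.inr rfl
  have hψS : ∀ k, crcPsi n c m e k f ∈ S := by
    intro k
    induction k with
    | zero => exact hφS 0
    | succ k ih =>
      show max (crcPsi n c m e k f) (crcPhi n c m e (k+1) f) ∈ S
      rcases max_choice (crcPsi n c m e k f) (crcPhi n c m e (k+1) f) with hh | hh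
      · rw [hh]; exact ih
      · rw [hh]; exact hφS (k+1)
  have hψmono : Monotone fun k => crcPsi n c m e k f :=
    monotone_nat_of_le_succ fun k => le_max_left _ _
  have hψφ : ∀ k, crcPhi n c m e k f ≤ crcPsi n c m e k f := by
    intro k
    cases k with
    | zero => exact le_refl _
    | succ k => exact le_max_right _ _
  have hψle : ∀ k, crcPsi n c m e k f ≤ s := fun k => hmem_le _ (hψS k)
  have hψm : ∀ k, m ≤ crcPsi n c m e k f := fun k => hMin.2 (hSΛ (hψS k))
  have hbddr : BddAbove (Set.range fun k => crcPsi n c m e k f) := by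
    refine ⟨s, ?_⟩
    rintro _ ⟨k, rfl⟩
    exact hψle k
  have hsup : (⨆ k, crcPsi n c m e k f) = s := by
    apply le_antisymm
    · exact ciSup_le hψle
    · refine csSup_le hSne fun t ht => ?_
      rcases ht with ⟨⟨k, rfl⟩, htc⟩ | rfl
      · have heq : crcPhi n c m e k f = e k := if_pos htc
        calc e k = crcPhi n c m e k f := heq.symm
          _ ≤ crcPsi n c m e k f := hψφ k
          _ ≤ ⨆ k, crcPsi n c m e k f := le_ciSup hbddr k
      · exact le_trans (hψm 0) (le_ciSup hbddr 0)
  have hψtend : Tendsto (fun k => crcPsi n c m e k f) atTop (𝓝 s) := by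
    have := tendsto_atTop_ciSup hψmono hbddr
    rwa [hsup] at this
  have hψtendW : Tendsto (fun k => crcPsi n c m e k f) atTop (𝓝[Λ ∩ Iic s] s) := by
    refine tendsto_nhdsWithin_of_tendsto_nhds_of_eventually_within _ hψtend ?_
    exact Eventually.of_forall fun k => ⟨hSΛ (hψS k), hψle k⟩
  have hFs : (∑ i, f i s) ≤ c := by
    have hms : m ≤ s := hmem_le m (Or.inr rfl)
    rcases eq_or_lt_of_le hms with hms' | hms'
    · have hxeq : s = x := le_antisymm (hms' ▸ hMin.2 hx) hxs
      rw [hxeq]; exact hxc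
    · have hev : ∀ᶠ k in atTop, (∑ i, f i (crcPsi n c m e k f)) ≤ c := by
        have hgt : ∀ᶠ k in atTop, m < crcPsi n c m e k f :=
          hψtend.eventually (eventually_gt_nhds hms')
        filter_upwards [hgt] with k hk
        rcases hψS k with ⟨-, hc'⟩ | hmk
        · exact hc'
        · exact absurd hmk (LT.lt.ne' hk)
      have hsum_tend : Tendsto (fun k => ∑ i, f i (crcPsi n c m e k f)) atTop
          (𝓝 (∑ i, f i s)) :=
        tendsto_finset_sum _ fun i _ => ((hlc i s hsΛ).tendsto).comp hψtendW
      exact le_of_tendsto hsum_tend hev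
  refine ⟨hxs, hsΛ, hFs, fun j => ?_⟩
  have : Tendsto (fun k => f j (crcPsi n c m e k f)) atTop (𝓝 (f j s)) :=
    ((hlc j s hsΛ).tendsto).comp hψtendW
  exact this.limsup_eq

/-- **Conformal risk control (generic guarantee).**
Given `N+1` exchangeable random loss functions `L i : Ω → ℝ → ℝ` that are a.s.
left-continuous and nondecreasing on a nonempty closed bounded `Λ ⊆ ℝ` with minimum
`lamMin`, a deterministic left-continuous nondecreasing pointwise a.s. upper bound `B`,
and `h ω lam = (B lam + ∑_{i<N} L i ω lam) / (N+1)`, any measurable `lamHat` taking values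
in `Λ` with `h ω (lamHat ω) ≤ α` almost surely satisfies `E[L_{N+1}(lamHat)] ≤ α`. -/
theorem stmt_0
    {Ω : Type*} [MeasurableSpace Ω] (ℙ : Measure Ω) [IsProbabilityMeasure ℙ]
    (N : ℕ) (hN : 0 < N)
    (Λ : Set ℝ) (hΛne : Λ.Nonempty) (hΛclosed : IsClosed Λ)
    (hΛbdd : Bornology.IsBounded Λ)
    (lamMin : ℝ) (hMin : IsLeast Λ lamMin)
    (L : Fin (N + 1) → Ω → ℝ → ℝ)
    (hLmeas : ∀ i, Measurable fun ω => L i ω)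
    (hExch : ∀ σ : Equiv.Perm (Fin (N + 1)),
      Measure.map (fun ω => fun i => L (σ i) ω) ℙ
        = Measure.map (fun ω => fun i => L i ω) ℙ)
    (hLleftCont : ∀ i, ∀ᵐ ω ∂ℙ, ∀ lam ∈ Λ,
      ContinuousWithinAt (L i ω) (Λ ∩ Iic lam) lam)
    (hLmono : ∀ i, ∀ᵐ ω ∂ℙ, MonotoneOn (L i ω) Λ)
    (B : ℝ → ℝ)
    (hBleftCont : ∀ lam ∈ Λ, ContinuousWithinAt B (Λ ∩ Iic lam) lam)
    (hBmono : MonotoneOn B Λ)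
    (hLB : ∀ i, ∀ᵐ ω ∂ℙ, ∀ lam ∈ Λ, L i ω lam ≤ B lam)
    (hLint : ∀ i, ∀ lam ∈ Λ, Integrable (fun ω => L i ω lam) ℙ)
    (α : ℝ)
    (h : Ω → ℝ → ℝ)
    (hdef : ∀ ω lam,
      h ω lam = (B lam + ∑ i : Fin N, L i.castSucc ω lam) / (N + 1))
    (lamHat : Ω → ℝ) (hlamHatMeas : Measurable lamHat)
    (hlamHatΛ : ∀ᵐ ω ∂ℙ, lamHat ω ∈ Λ)
    (hlamHatIn : ∀ᵐ ω ∂ℙ, h ω (lamHat ω) ≤ α)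
    (hInt : Integrable (fun ω => L (Fin.last N) ω (lamHat ω)) ℙ) :
    ∫ ω, L (Fin.last N) ω (lamHat ω) ∂ℙ ≤ α := by
  classical
  have hbddA : BddAbove Λ := hΛbdd.bddAbove
  set lamSup := sSup Λ with hlamSupDef
  have hlamSupΛ : lamSup ∈ Λ := hΛclosed.csSup_mem hΛne hbddA
  -- countable dense subset of Λ
  obtain ⟨s0, hs0c, hs0d⟩ := TopologicalSpace.exists_countable_dense ↥Λ
  set D0 : Set ℝ := Subtype.val '' s0 with hD0def
  have hD0c : D0.Countable := hs0c.image _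
  have hD0Λ : D0 ⊆ Λ := by rintro _ ⟨⟨y, hy⟩, -, rfl⟩; exact hy
  have hD0dense : ∀ a b : ℝ, (Ioo a b ∩ Λ).Nonempty → ∃ d ∈ D0, d ∈ Ioo a b := by
    rintro a b ⟨μ, hμI, hμΛ⟩
    have hopen : IsOpen ((Subtype.val : ↥Λ → ℝ) ⁻¹' Ioo a b) :=
      isOpen_Ioo.preimage continuous_subtype_val
    have hne : ((Subtype.val : ↥Λ → ℝ) ⁻¹' Ioo a b).Nonempty := ⟨⟨μ, hμΛ⟩, hμI⟩
    obtain ⟨z, hz0, hzI⟩ := hs0d.exists_mem_open hopen hne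
    exact ⟨z, ⟨z, hz0, rfl⟩, hzI⟩
  -- left-isolated points of Λ
  set E : Set ℝ := {x | x ∈ Λ ∧ ∃ δ > (0:ℝ), Ioo (x - δ) x ∩ Λ = ∅} with hEdef
  have hEc : E.Countable := by
    have hchoice : ∀ x ∈ E, ∃ p : ℝ × ℚ, 0 < p.1 ∧ Ioo (x - p.1) x ∩ Λ = ∅ ∧
        x - p.1 < (p.2 : ℝ) ∧ (p.2 : ℝ) < x := by
      intro x hx
      obtain ⟨δ, hδ, hem⟩ := hx.2
      obtain ⟨q, hq1, hq2⟩ := exists_rat_btwn (show x - δ < x by linarith)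
      exact ⟨(δ, q), hδ, hem, hq1, hq2⟩
    choose! g hg1 hg2 hg3 hg4 using hchoice
    have hkey : ∀ a ∈ E, ∀ b ∈ E, a < b → ((g a).2 : ℝ) < ((g b).2 : ℝ) := by
      intro a ha b hb hab
      have hnotin : a ∉ Ioo (b - (g b).1) b ∩ Λ := by
        rw [hg2 b hb]; exact notMem_empty a
      have hle : a ≤ b - (g b).1 := by
        by_contra hgt
        push_neg at hgt
        exact hnotin ⟨⟨hgt, hab⟩, ha.1⟩
      have h1 := hg4 a ha
      have h2 := hg3 b hb
      linarith
    have hinj : InjOn (fun x => (g x).2) E := by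
      intro a ha b hb hab
      by_contra hne
      have hab' : (g a).2 = (g b).2 := hab
      rcases lt_or_gt_of_ne hne with hlt | hlt
      · have := hkey a ha b hb hlt
        rw [hab'] at this
        exact lt_irrefl _ this
      · have := hkey b hb a ha hlt
        rw [hab'] at this
        exact lt_irrefl _ this
    have : Countable ↥E := (hinj.injective).countable
    exact Set.countable_coe_iff.mp this
  -- enumeration of the countable grid
  have hDfullc : (D0 ∪ E ∪ {lamMin}).Countable :=
    (hD0c.union hEc).union (countable_singleton lamMin)
  have hDfullne : (D0 ∪ E ∪ {lamMin}).Nonempty := ⟨lamMin, by simp⟩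
  obtain ⟨e, he_range⟩ := hDfullc.exists_eq_range hDfullne
  have heΛ : Set.range e ⊆ Λ := by
    intro d hd
    rw [← he_range] at hd
    rcases hd with (hd | hd) | hd
    · exact hD0Λ hd
    · exact hd.1
    · rw [mem_singleton_iff] at hd
      exact hd ▸ hMin.1
  have hD2 : ∀ x ∈ Λ, ∀ ε > (0:ℝ), ∃ d ∈ Set.range e, d ∈ Λ ∧ x - ε < d ∧ d ≤ x := by
    intro x hx ε hε
    by_cases hxE : x ∈ E
    · exact ⟨x, he_range ▸ Or.inl (Or.inr hxE), hx, by linarith, le_refl x⟩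
    · have hne : (Ioo (x - ε) x ∩ Λ).Nonempty := by
        rcases eq_empty_or_nonempty (Ioo (x - ε) x ∩ Λ) with hem | hne
        · exact absurd ⟨hx, ε, hε, hem⟩ hxE
        · exact hne
      obtain ⟨d, hdD0, hdI⟩ := hD0dense _ _ hne
      exact ⟨d, he_range ▸ Or.inl (Or.inl hdD0), hD0Λ hdD0, hdI.1, le_of_lt hdI.2⟩
  -- main objects
  set c : ℝ := ((N:ℝ) + 1) * α with hcdef
  set T : Ω → (Fin (N+1) → ℝ → ℝ) := fun ω i => L i ω with hTdef
  have hTmeas : Measurable T := measurable_pi_lambda _ hLmeas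
  set lamStar : Ω → ℝ := fun ω => crcG (N+1) c lamMin e (T ω) with hlamStarDef
  -- a.e. facts
  have hmonoA : ∀ᵐ ω ∂ℙ, ∀ i, MonotoneOn (L i ω) Λ := ae_all_iff.2 hLmono
  have hlcA : ∀ᵐ ω ∂ℙ, ∀ i, ∀ lam ∈ Λ, ContinuousWithinAt (L i ω) (Λ ∩ Iic lam) lam :=
    ae_all_iff.2 hLleftCont
  have hLBA : ∀ᵐ ω ∂ℙ, ∀ i, ∀ lam ∈ Λ, L i ω lam ≤ B lam := ae_all_iff.2 hLB
  have hsumHat : ∀ᵐ ω ∂ℙ, (∑ i, L i ω (lamHat ω)) ≤ c := by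
    filter_upwards [hLB (Fin.last N), hlamHatΛ, hlamHatIn] with ω h1 h2 h3
    have hpos : (0:ℝ) < (N:ℝ) + 1 := by positivity
    rw [hdef] at h3
    rw [div_le_iff₀ hpos] at h3
    have h5 : ∑ i : Fin (N+1), L i ω (lamHat ω)
        = (∑ i : Fin N, L i.castSucc ω (lamHat ω)) + L (Fin.last N) ω (lamHat ω) :=
      Fin.sum_univ_castSucc _
    rw [hcdef, h5]
    have h6 := h1 (lamHat ω) h2
    linarith
  have hcore : ∀ᵐ ω ∂ℙ, lamHat ω ≤ lamStar ω ∧ lamStar ω ∈ Λ ∧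
      (∑ i, L i ω (lamStar ω)) ≤ c ∧
      ∀ σ : Equiv.Perm (Fin (N+1)), ∀ j,
        crcPsiStar (N+1) c lamMin e j (fun i => L (σ i) ω) = L (σ j) ω (lamStar ω) := by
    filter_upwards [hmonoA, hlcA, hsumHat, hlamHatΛ] with ω hm hl hs hΛ'
    have hbase := crc_core (N+1) Λ hΛclosed hbddA lamMin hMin e heΛ hD2 c (T ω)
      (fun i => hm i) (fun i => hl i) (lamHat ω) hΛ' hs
    refine ⟨hbase.1, hbase.2.1, hbase.2.2.1, fun σ j => ?_⟩
    have hsumσ : (∑ i, L (σ i) ω (lamHat ω)) ≤ c := by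
      rw [show (∑ i, L (σ i) ω (lamHat ω)) = ∑ i, L i ω (lamHat ω) from
        Equiv.sum_comp σ (fun i => L i ω (lamHat ω))]
      exact hs
    have hσ := crc_core (N+1) Λ hΛclosed hbddA lamMin hMin e heΛ hD2 c
      (fun i => L (σ i) ω) (fun i => hm (σ i)) (fun i => hl (σ i)) (lamHat ω) hΛ' hsumσ
    have hGσ : crcG (N+1) c lamMin e (fun i => L (σ i) ω) = lamStar ω :=
      crcG_comp c lamMin e σ (T ω)
    have := hσ.2.2.2 j
    rw [hGσ] at this
    exact this
  -- integrability of L j (lamStar)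
  have hASM : ∀ j : Fin (N+1), AEStronglyMeasurable (fun ω => L j ω (lamStar ω)) ℙ := by
    intro j
    have heq : (fun ω => crcPsiStar (N+1) c lamMin e j (T ω)) =ᵐ[ℙ]
        fun ω => L j ω (lamStar ω) := by
      filter_upwards [hcore] with ω hω
      have := hω.2.2.2 (Equiv.refl _) j
      simpa using this
    exact (((crcPsiStar_measurable c lamMin e j).comp hTmeas).aestronglyMeasurable).congr heq
  have hIntStar : ∀ j, Integrable (fun ω => L j ω (lamStar ω)) ℙ := by
    intro j
    refine Integrable.mono'
      (((hLint j lamMin hMin.1).abs).add (integrable_const |B lamSup|)) (hASM j) ?_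
    filter_upwards [hcore, hmonoA, hLBA] with ω hω hm hb
    have h1 : L j ω lamMin ≤ L j ω (lamStar ω) := hm j hMin.1 hω.2.1 (hMin.2 hω.2.1)
    have h2 : L j ω (lamStar ω) ≤ B lamSup :=
      le_trans (hb j _ hω.2.1) (hBmono hω.2.1 hlamSupΛ (le_csSup hbddA hω.2.1))
    rw [Real.norm_eq_abs, abs_le]
    simp only [Pi.add_apply]
    constructor
    · have := neg_abs_le (L j ω lamMin)
      have := abs_nonneg (B lamSup)
      linarith
    · have := le_abs_self (B lamSup)
      have := abs_nonneg (L j ω lamMin)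
      linarith
  -- exchangeability: all indices have the same integral at lamStar
  have hkey : ∀ j : Fin (N+1),
      ∫ ω, L j ω (lamStar ω) ∂ℙ = ∫ ω, L (Fin.last N) ω (lamStar ω) ∂ℙ := by
    intro j
    set σ : Equiv.Perm (Fin (N+1)) := Equiv.swap j (Fin.last N) with hσdef
    set Tσ : Ω → (Fin (N+1) → ℝ → ℝ) := fun ω i => L (σ i) ω with hTσdef
    have hTσmeas : Measurable Tσ := measurable_pi_lambda _ fun i => hLmeas (σ i)
    have hΨmeas : Measurable (crcPsiStar (N+1) c lamMin e j) :=
      crcPsiStar_measurable c lamMin e j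
    have e1 : ∫ ω, L j ω (lamStar ω) ∂ℙ
        = ∫ ω, crcPsiStar (N+1) c lamMin e j (T ω) ∂ℙ := by
      refine integral_congr_ae ?_
      filter_upwards [hcore] with ω hω
      have := hω.2.2.2 (Equiv.refl _) j
      simpa using this.symm
    have e2 : ∫ ω, crcPsiStar (N+1) c lamMin e j (T ω) ∂ℙ
        = ∫ f, crcPsiStar (N+1) c lamMin e j f ∂(Measure.map T ℙ) :=
      (integral_map hTmeas.aemeasurable hΨmeas.aestronglyMeasurable).symm
    have e3 : Measure.map T ℙ = Measure.map Tσ ℙ := (hExch σ).symm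
    have e4 : ∫ f, crcPsiStar (N+1) c lamMin e j f ∂(Measure.map Tσ ℙ)
        = ∫ ω, crcPsiStar (N+1) c lamMin e j (Tσ ω) ∂ℙ :=
      integral_map hTσmeas.aemeasurable hΨmeas.aestronglyMeasurable
    have e5 : ∫ ω, crcPsiStar (N+1) c lamMin e j (Tσ ω) ∂ℙ
        = ∫ ω, L (Fin.last N) ω (lamStar ω) ∂ℙ := by
      refine integral_congr_ae ?_
      filter_upwards [hcore] with ω hω
      have := hω.2.2.2 σ j
      rw [hσdef, Equiv.swap_apply_left] at this
      exact this
    rw [e1, e2, e3, e4, e5]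
  -- conclude
  have hsumInt : ∫ ω, (∑ i : Fin (N+1), L i ω (lamStar ω)) ∂ℙ ≤ c := by
    have hle : (fun ω => ∑ i : Fin (N+1), L i ω (lamStar ω)) ≤ᵐ[ℙ] fun _ => c := by
      filter_upwards [hcore] with ω hω using hω.2.2.1
    have := integral_mono_ae (integrable_finset_sum _ fun i _ => hIntStar i)
      (integrable_const c) hle
    simpa [integral_const, measure_univ] using this
  have hsplit : ∫ ω, (∑ i : Fin (N+1), L i ω (lamStar ω)) ∂ℙ
      = ((N:ℝ) + 1) * ∫ ω, L (Fin.last N) ω (lamStar ω) ∂ℙ := by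
    rw [integral_finset_sum _ fun i _ => hIntStar i]
    rw [show (∑ i : Fin (N+1), ∫ ω, L i ω (lamStar ω) ∂ℙ)
        = ∑ _i : Fin (N+1), ∫ ω, L (Fin.last N) ω (lamStar ω) ∂ℙ from
      Finset.sum_congr rfl fun i _ => hkey i]
    rw [Finset.sum_const, Finset.card_univ, Fintype.card_fin, nsmul_eq_mul]
    push_cast
    ring
  have hstarle : ∫ ω, L (Fin.last N) ω (lamStar ω) ∂ℙ ≤ α := by
    have hpos : (0:ℝ) < (N:ℝ) + 1 := by positivity
    rw [hsplit, hcdef] at hsumInt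
    exact le_of_mul_le_mul_left (by linarith) hpos
  have hfinal : ∫ ω, L (Fin.last N) ω (lamHat ω) ∂ℙ
      ≤ ∫ ω, L (Fin.last N) ω (lamStar ω) ∂ℙ := by
    refine integral_mono_ae hInt (hIntStar (Fin.last N)) ?_
    filter_upwards [hcore, hmonoA, hlamHatΛ] with ω hω hm hΛ'
    exact hm (Fin.last N) hΛ' hω.2.1 hω.1
  linarith
end

section
/- Let N be a positive integer, Λ ⊂ ℝ a nonempty closed bounded set with minimum λ_min, and L_1, ..., L_{N+1} exchangeable random functions from Λ to ℝ that are almost surely left-continuous and nondecreasing in λ. Let B : Λ → ℝ be left-continuous and nondecreasing with, for each i, almost surely L_i(λ) ≤ B(λ) for all λ ∈ Λ. Let φ : ℝ → ℝ be a real-valued OCE disutility function with associated OCE risk measure R[X] = inf_{s∈ℝ} (s + E[φ(X − s)]). Fix α, t ∈ ℝ and define L̃_{i,t}(λ) := t + φ(L_i(λ) − t), B̃_t(λ) := t + φ(B(λ) − t), h̃_t(λ) := (1/(N+1)) (B̃_t(λ) + Σ_{i=1}^N L̃_{i,t}(λ)), and the random set Λ̂_t := {λ ∈ Λ : h̃_t(λ)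 ≤ α}. Then for any measurable random variable λ̂ taking values in Λ with λ̂ ∈ Λ̂_t almost surely, it holds that R[L_{N+1}(λ̂)] ≤ α, assuming all relevant expectations exist. -/
/-!
For each index `j`, let `G_j` be the value of `L̃_j` at the largest `λ ∈ Λ` satisfying the
constraint built from `B̃` and the losses other than `j` (a supremum over a countable left-dense
grid, which keeps `G_j` measurable). If `k` carries the largest of these points, monotonicity and
`L̃_k ≤ B̃` give `∑_j G_j ≤ B̃(λ_k) + ∑_{j ≠ k} L̃_j(λ_k) ≤ (N+1) α`. By exchangeability the `G_j`
are identically distributed, so `E[G_{N+1}] ≤ α`. Since `λ̂` satisfies the `(N+1)`-th constraint,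
left-continuity gives `L̃_{N+1}(λ̂) ≤ G_{N+1}`, and `R[X] ≤ t + E[φ(X - t)] = E[L̃_{N+1}(λ̂)]`.
-/

open MeasureTheory Set

lemma IsCompact.exists_rat_indexed_left_approx {Λ : Set ℝ} (hΛ : IsCompact Λ)
    (hne : Λ.Nonempty) :
    ∃ p : ℚ → ℝ, (∀ q, p q ∈ Λ) ∧ ∀ x ∈ Λ, ∀ ε > 0, ∃ q, p q ∈ Ioc (x - ε) x := by
  have hcompact : ∀ y : ℝ, IsCompact (Λ ∩ Ici y) := fun y => hΛ.inter_right isClosed_Ici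
  -- capping `q` at `sSup Λ` keeps the set nonempty without a case split
  refine ⟨fun q => sInf (Λ ∩ Ici (min (q : ℝ) (sSup Λ))), fun q => ?_, fun x hx ε hε => ?_⟩
  · exact ((hcompact _).sInf_mem ⟨sSup Λ, hΛ.sSup_mem hne, min_le_right (q : ℝ) _⟩).1
  obtain ⟨q, hεq, hqx⟩ := exists_rat_btwn (sub_lt_self x hε)
  have hmin : min (q : ℝ) (sSup Λ) = q := min_eq_left (hqx.le.trans (le_csSup hΛ.bddAbove hx))
  refine ⟨q, ?_, ?_⟩ <;> simp only [hmin]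
  · exact hεq.trans_le (le_csInf ⟨x, hx, hqx.le⟩ fun y hy => hy.2)
  · exact csInf_le (hcompact _).bddBelow ⟨hx, hqx.le⟩

noncomputable section

namespace ConformalRisk

variable {ι κ : Type*} [Fintype ι]

-- With `b = B̃_t` and `w i = L̃_{i,t}`, `heldOutScore b w (Fin.last n) x / (n + 1)` is `h̃_t(x)`.
def heldOutScore (b : ℝ → ℝ) (w : ι → ℝ → ℝ) (j : ι) (x : ℝ) : ℝ :=
  b x + ∑ i, w i x - w j x

/- `heldOutValue … w j` is the supremum of `w j` over the grid points `p q` that satisfy the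
`j`-th held-out constraint; infeasible grid points are replaced by `x₀`, which is harmless once
`x₀` is itself feasible for every `j`. -/
def heldOutCandidate (b : ℝ → ℝ) (c : ℝ) (p : κ → ℝ) (x₀ : ℝ) (w : ι → ℝ → ℝ) (j : ι)
    (q : κ) : ℝ :=
  if heldOutScore b w j (p q) ≤ c then p q else x₀

def heldOutValue (b : ℝ → ℝ) (c : ℝ) (p : κ → ℝ) (x₀ : ℝ) (w : ι → ℝ → ℝ) (j : ι) : ℝ :=
  ⨆ q, w j (heldOutCandidate b c p x₀ w j q)

variable {Λ : Set ℝ} {b : ℝ → ℝ} {c x₀ : ℝ} {p : κ → ℝ} {w : ι → ℝ → ℝ}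

lemma heldOutScore_comp_perm (σ : Equiv.Perm ι) (j : ι) (x : ℝ) :
    heldOutScore b (w ∘ σ) j x = heldOutScore b w (σ j) x := by
  simp only [heldOutScore, Function.comp_apply, Equiv.sum_comp σ (fun i => w i x)]

lemma heldOutValue_comp_perm (σ : Equiv.Perm ι) (j : ι) :
    heldOutValue b c p x₀ (w ∘ σ) j = heldOutValue b c p x₀ w (σ j) := by
  simp only [heldOutValue, heldOutCandidate, heldOutScore_comp_perm, Function.comp_apply]

lemma heldOutScore_monotoneOn (hb : MonotoneOn b Λ) (hw : ∀ i, MonotoneOn (w i) Λ) (j : ι) :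
    MonotoneOn (heldOutScore b w j) Λ := by
  classical
  have herase : ∀ x, heldOutScore b w j x = b x + ∑ i ∈ Finset.univ.erase j, w i x := by
    intro x
    rw [heldOutScore, ← Finset.add_sum_erase _ _ (Finset.mem_univ j)]
    ring
  intro x hx y hy hxy
  rw [herase, herase]
  exact add_le_add (hb hx hy hxy) (Finset.sum_le_sum fun i _ => hw i hx hy hxy)

lemma heldOutCandidate_mem (hp : ∀ q, p q ∈ Λ) (hx₀ : x₀ ∈ Λ) (j : ι) (q : κ) :
    heldOutCandidate b c p x₀ w j q ∈ Λ := by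
  unfold heldOutCandidate
  split_ifs
  exacts [hp q, hx₀]

lemma heldOutScore_candidate_le {j : ι} (hx₀ : heldOutScore b w j x₀ ≤ c) (q : κ) :
    heldOutScore b w j (heldOutCandidate b c p x₀ w j q) ≤ c := by
  unfold heldOutCandidate
  split_ifs with h
  exacts [h, hx₀]

lemma heldOutValue_le [Nonempty κ] {M : ℝ} (hp : ∀ q, p q ∈ Λ) (hx₀ : x₀ ∈ Λ) {j : ι}
    (hM : ∀ y ∈ Λ, w j y ≤ M) : heldOutValue b c p x₀ w j ≤ M :=
  ciSup_le fun q => hM _ (heldOutCandidate_mem hp hx₀ j q)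

lemma le_heldOutValue {M x : ℝ} (hp : ∀ q, p q ∈ Λ)
    (hpx : ∀ y ∈ Λ, ∀ ε > 0, ∃ q, p q ∈ Ioc (y - ε) y) (hx₀ : x₀ ∈ Λ) {j : ι}
    (hscore : MonotoneOn (heldOutScore b w j) Λ) (hM : ∀ y ∈ Λ, w j y ≤ M) (hx : x ∈ Λ)
    (hxc : heldOutScore b w j x ≤ c) (hcont : ContinuousWithinAt (w j) (Λ ∩ Iic x) x) :
    w j x ≤ heldOutValue b c p x₀ w j := by
  refine le_of_forall_pos_le_add fun ε hε => ?_
  obtain ⟨δ, hδ, hδε⟩ := Metric.continuousWithinAt_iff.1 hcont ε hε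
  obtain ⟨q, hq⟩ := hpx x hx δ hδ
  have hcand : heldOutCandidate b c p x₀ w j q = p q :=
    if_pos ((hscore (hp q) hx hq.2).trans hxc)
  have hclose : dist (w j (p q)) (w j x) < ε := by
    refine hδε ⟨hp q, hq.2⟩ ?_
    rw [Real.dist_eq, abs_lt]
    constructor <;> linarith [hq.1, hq.2]
  have hbdd : BddAbove (range fun q => w j (heldOutCandidate b c p x₀ w j q)) :=
    ⟨M, by rintro _ ⟨q, rfl⟩; exact hM _ (heldOutCandidate_mem hp hx₀ j q)⟩
  have hle : w j (p q) ≤ heldOutValue b c p x₀ w j := hcand ▸ le_ciSup hbdd q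
  rw [Real.dist_eq, abs_lt] at hclose
  linarith [hclose.1]

lemma sum_heldOutValue_le [Nonempty ι] [Nonempty κ] (hp : ∀ q, p q ∈ Λ) (hx₀ : x₀ ∈ Λ)
    (hx₀c : ∀ j, heldOutScore b w j x₀ ≤ c) (hw : ∀ i, MonotoneOn (w i) Λ)
    (hwb : ∀ i, ∀ x ∈ Λ, w i x ≤ b x) :
    ∑ j, heldOutValue b c p x₀ w j ≤ c := by
  refine le_of_forall_pos_le_add fun ε hε => ?_
  have hε' : 0 < ε / Fintype.card ι := by positivity
  have hnear : ∀ j, ∃ q, heldOutValue b c p x₀ w j - ε / Fintype.card ι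
      < w j (heldOutCandidate b c p x₀ w j q) :=
    fun j => exists_lt_of_lt_ciSup (sub_lt_self _ hε')
  choose q hq using hnear
  set μ := fun j => heldOutCandidate b c p x₀ w j (q j)
  have hμ : ∀ j, μ j ∈ Λ := fun j => heldOutCandidate_mem hp hx₀ j (q j)
  -- all `μ j` lie below `μ k`, and `μ k` is feasible for the `k`-th constraint
  obtain ⟨k, hk⟩ := Finite.exists_max μ
  calc ∑ j, heldOutValue b c p x₀ w j
      ≤ ∑ j, (w j (μ j) + ε / Fintype.card ι) :=
        Finset.sum_le_sum fun j _ => by linarith [hq j]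
    _ = ∑ j, w j (μ j) + ε := by
        rw [Finset.sum_add_distrib, Finset.sum_const, Finset.card_univ, nsmul_eq_mul]
        field_simp
    _ ≤ ∑ j, w j (μ k) + ε := by
        gcongr with j
        exact hw j (hμ j) (hμ k) (hk j)
    _ ≤ heldOutScore b w k (μ k) + ε := by
        unfold heldOutScore
        linarith [hwb k (μ k) (hμ k)]
    _ ≤ c + ε := by gcongr; exact heldOutScore_candidate_le (hx₀c k) (q k)

lemma heldOutScore_last {n : ℕ} (b : ℝ → ℝ) (w : Fin (n + 1) → ℝ → ℝ) (x : ℝ) :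
    heldOutScore b w (Fin.last n) x = b x + ∑ i : Fin n, w i.castSucc x := by
  rw [heldOutScore, Fin.sum_univ_castSucc]
  ring

lemma measurable_heldOutScore (j : ι) (x : ℝ) :
    Measurable fun w : ι → ℝ → ℝ => heldOutScore b w j x := by
  unfold heldOutScore
  fun_prop

lemma measurable_heldOutValue [Countable κ] (j : ι) :
    Measurable fun w : ι → ℝ → ℝ => heldOutValue b c p x₀ w j := by
  refine Measurable.iSup fun q => ?_
  simp only [heldOutCandidate, apply_ite]
  exact Measurable.ite (measurableSet_le (measurable_heldOutScore j _) measurable_const)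
    (by fun_prop) (by fun_prop)

end ConformalRisk

end

section Exchangeable

variable {Ω ι β : Type*} [MeasurableSpace Ω] [MeasurableSpace β] {μ : Measure Ω}

def Exchangeable (V : Ω → ι → β) (μ : Measure Ω) : Prop :=
  ∀ σ : Equiv.Perm ι, μ.map (fun ω i => V ω (σ i)) = μ.map V

variable {V : Ω → ι → β}

lemma Exchangeable.identDistrib (hV : Measurable V) (h : Exchangeable V μ)
    (σ : Equiv.Perm ι) : ProbabilityTheory.IdentDistrib (fun ω i => V ω (σ i)) V μ μ where
  aemeasurable_fst := (by fun_prop : Measurable fun ω i => V ω (σ i)).aemeasurable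
  aemeasurable_snd := hV.aemeasurable
  map_eq := h σ

lemma Exchangeable.comp {γ : Type*} [MeasurableSpace γ] (hV : Measurable V)
    (h : Exchangeable V μ) {g : β → γ} (hg : Measurable g) :
    Exchangeable (fun ω i => g (V ω i)) μ := fun σ =>
  ((h.identDistrib hV σ).comp (by fun_prop : Measurable fun (v : ι → β) i => g (v i))).map_eq

lemma Exchangeable.ae_comp_perm (hV : Measurable V) (h : Exchangeable V μ)
    {S : Set (ι → β)} (hS : MeasurableSet S) (hVS : ∀ᵐ ω ∂μ, V ω ∈ S) (σ : Equiv.Perm ι) :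
    ∀ᵐ ω ∂μ, V ω ∘ σ ∈ S :=
  (h.identDistrib hV σ).symm.ae_mem_snd hS hVS

lemma Exchangeable.card_mul_integral_le [Fintype ι] [IsProbabilityMeasure μ]
    (hV : Measurable V) (h : Exchangeable V μ) {Φ : ι → (ι → β) → ℝ}
    (hΦ : ∀ j, Measurable (Φ j)) (hΦperm : ∀ (σ : Equiv.Perm ι) j v, Φ j (v ∘ σ) = Φ (σ j) v)
    {j₀ : ι} {Y : Ω → ℝ} {M c : ℝ} (hY : Integrable Y μ)
    (hYΦ : ∀ᵐ ω ∂μ, Y ω ≤ Φ j₀ (V ω)) (hΦM : ∀ᵐ ω ∂μ, Φ j₀ (V ω) ≤ M)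
    (hsum : ∀ᵐ ω ∂μ, ∑ j, Φ j (V ω) ≤ c) :
    (Fintype.card ι : ℝ) * ∫ ω, Y ω ∂μ ≤ c := by
  classical
  have hint₀ : Integrable (fun ω => Φ j₀ (V ω)) μ :=
    integrable_of_le_of_le ((hΦ j₀).comp hV).aestronglyMeasurable hYΦ hΦM hY
      (integrable_const M)
  -- `Φ j (V ω) = Φ j₀ (V ω ∘ swap j j₀)`, which has the law of `Φ j₀ (V ω)`
  have hlaw : ∀ j,
      ProbabilityTheory.IdentDistrib (fun ω => Φ j (V ω)) (fun ω => Φ j₀ (V ω)) μ μ := by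
    intro j
    have := (h.identDistrib hV (Equiv.swap j j₀)).comp (hΦ j₀)
    simp only [Function.comp_def] at this
    convert this using 2 with ω
    rw [← Function.comp_def, hΦperm, Equiv.swap_apply_right]
  have hint : ∀ j, Integrable (fun ω => Φ j (V ω)) μ := fun j => (hlaw j).integrable_iff.2 hint₀
  calc Fintype.card ι * ∫ ω, Y ω ∂μ ≤ Fintype.card ι * ∫ ω, Φ j₀ (V ω) ∂μ :=
        mul_le_mul_of_nonneg_left (integral_mono_ae hY hint₀ hYΦ) (Nat.cast_nonneg _)
    _ = ∫ ω, ∑ j, Φ j (V ω) ∂μ := by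
        rw [integral_finsetSum _ fun j _ => hint j,
          Finset.sum_congr rfl fun j _ => (hlaw j).integral_eq]
        simp
    _ ≤ c := by
        refine (integral_mono_ae (integrable_finsetSum _ fun j _ => hint j)
          (integrable_const c) hsum).trans ?_
        simp

end Exchangeable

section ConformalRiskControl

open ConformalRisk

variable {Ω ι : Type*} [MeasurableSpace Ω] {μ : Measure Ω} [IsProbabilityMeasure μ]

theorem Exchangeable.integral_le_of_heldOutScore_le [Fintype ι]
    {W : Ω → ι → ℝ → ℝ} (hWm : Measurable W) (hW : Exchangeable W μ)
    {Λ : Set ℝ} (hΛ : IsCompact Λ) {x₀ : ℝ} (hx₀ : IsLeast Λ x₀)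
    {b : ℝ → ℝ} (hb : MonotoneOn b Λ)
    (hWmono : ∀ᵐ ω ∂μ, ∀ i, MonotoneOn (W ω i) Λ)
    (hWb : ∀ᵐ ω ∂μ, ∀ i, ∀ x ∈ Λ, W ω i x ≤ b x)
    {j₀ : ι} {X : Ω → ℝ} (hX : ∀ᵐ ω ∂μ, X ω ∈ Λ)
    (hcont : ∀ᵐ ω ∂μ, ContinuousWithinAt (W ω j₀) (Λ ∩ Iic (X ω)) (X ω))
    {α : ℝ} (hXscore : ∀ᵐ ω ∂μ, heldOutScore b (W ω) j₀ (X ω) ≤ Fintype.card ι * α)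
    (hint : Integrable (fun ω => W ω j₀ (X ω)) μ) :
    ∫ ω, W ω j₀ (X ω) ∂μ ≤ α := by
  classical
  have : Nonempty ι := ⟨j₀⟩
  obtain ⟨p, hpΛ, hp⟩ := hΛ.exists_rat_indexed_left_approx hx₀.nonempty
  set c := (Fintype.card ι : ℝ) * α
  have hscore : ∀ᵐ ω ∂μ, ∀ j, MonotoneOn (heldOutScore b (W ω) j) Λ := by
    filter_upwards [hWmono] with ω h j using heldOutScore_monotoneOn hb h j
  have hfeas₀ : ∀ᵐ ω ∂μ, heldOutScore b (W ω) j₀ x₀ ≤ c := by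
    filter_upwards [hscore, hX, hXscore] with ω h hXω hs
    exact (h j₀ hx₀.1 hXω (hx₀.2 hXω)).trans hs
  have hfeas : ∀ᵐ ω ∂μ, ∀ j, heldOutScore b (W ω) j x₀ ≤ c := by
    refine ae_all_iff.2 fun j => ?_
    have := hW.ae_comp_perm hWm (S := {w | heldOutScore b w j₀ x₀ ≤ c})
      (measurableSet_le (measurable_heldOutScore j₀ x₀) measurable_const) hfeas₀
      (Equiv.swap j j₀)
    simpa only [mem_ofPred_eq, heldOutScore_comp_perm, Equiv.swap_apply_right] using this
  have hbound : ∀ᵐ ω ∂μ, ∀ y ∈ Λ, W ω j₀ y ≤ b (sSup Λ) := by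
    have hsup := hΛ.sSup_mem hx₀.nonempty
    filter_upwards [hWb] with ω h y hy
    exact (h j₀ y hy).trans (hb hy hsup (le_csSup hΛ.bddAbove hy))
  have hmean := hW.card_mul_integral_le hWm (Φ := fun j w => heldOutValue b c p x₀ w j)
    (fun j => measurable_heldOutValue j) (fun σ j _ => heldOutValue_comp_perm σ j) hint
    (by
      filter_upwards [hscore, hbound, hX, hXscore, hcont] with ω hs hM hXω hXs hc
      exact le_heldOutValue hpΛ hp hx₀.1 (hs j₀) hM hXω hXs hc)
    (by
      filter_upwards [hbound] with ω hM
      exact heldOutValue_le hpΛ hx₀.1 hM)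
    (by
      filter_upwards [hfeas, hWmono, hWb] with ω hf hm hle
      exact sum_heldOutValue_le hpΛ hx₀.1 hf hm hle)
  exact le_of_mul_le_mul_left hmean (by positivity)

end ConformalRiskControl

noncomputable def oceRisk {Ω : Type*} [MeasurableSpace Ω] (φ : ℝ → ℝ) (μ : Measure Ω)
    (X : Ω → ℝ) : ℝ :=
  ⨅ s : ℝ, (s + ∫ ω, φ (X ω - s) ∂μ)

lemma oceRisk_le_integral {Ω : Type*} [MeasurableSpace Ω] {μ : Measure Ω}
    [IsProbabilityMeasure μ] {φ : ℝ → ℝ} (hφ : ∀ x, x ≤ φ x) {X : Ω → ℝ}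
    (hX : Integrable X μ) (hφX : ∀ s, Integrable (fun ω => φ (X ω - s)) μ) (t : ℝ) :
    oceRisk φ μ X ≤ ∫ ω, (t + φ (X ω - t)) ∂μ := by
  have hbdd : BddBelow (range fun s : ℝ => s + ∫ ω, φ (X ω - s) ∂μ) := by
    refine ⟨∫ ω, X ω ∂μ, ?_⟩
    rintro _ ⟨s, rfl⟩
    have h := integral_mono (f := fun ω => X ω - s) (hX.sub (integrable_const s)) (hφX s)
      fun ω => hφ (X ω - s)
    rw [integral_sub hX (integrable_const s), integral_const, probReal_univ, one_smul] at h
    simp only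
    linarith
  rw [integral_add (integrable_const t) (hφX t), integral_const, probReal_univ, one_smul]
  exact ciInf_le hbdd t

theorem stmt_2_general
    {Ω : Type*} [MeasurableSpace Ω] (ℙ : Measure Ω) [IsProbabilityMeasure ℙ]
    (N : ℕ)
    (Λ : Set ℝ) (hΛclosed : IsClosed Λ)
    (hΛbdd : Bornology.IsBounded Λ)
    (lamMin : ℝ) (hMin : IsLeast Λ lamMin)
    (L : Fin (N + 1) → Ω → ℝ → ℝ)
    (hLmeas : ∀ i, Measurable fun ω => L i ω)
    (hExch : ∀ σ : Equiv.Perm (Fin (N + 1)),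
      Measure.map (fun ω => fun i => L (σ i) ω) ℙ
        = Measure.map (fun ω => fun i => L i ω) ℙ)
    (hLleftCont : ∀ i, ∀ᵐ ω ∂ℙ, ∀ lam ∈ Λ,
      ContinuousWithinAt (L i ω) (Λ ∩ Iic lam) lam)
    (hLmono : ∀ i, ∀ᵐ ω ∂ℙ, MonotoneOn (L i ω) Λ)
    (B : ℝ → ℝ)
    (hBmono : MonotoneOn B Λ)
    (hLB : ∀ i, ∀ᵐ ω ∂ℙ, ∀ lam ∈ Λ, L i ω lam ≤ B lam)
    (φ : ℝ → ℝ)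
    (hφmono : Monotone φ) (hφconv : ConvexOn ℝ univ φ)
    (hφsub : ∀ x : ℝ, x ≤ φ x)
    (α t : ℝ)
    (htilde : Ω → ℝ → ℝ)
    (hdef : ∀ ω lam, htilde ω lam =
      ((t + φ (B lam - t)) + ∑ i : Fin N, (t + φ (L i.castSucc ω lam - t))) / (N + 1))
    (lamHat : Ω → ℝ)
    (hlamHatΛ : ∀ᵐ ω ∂ℙ, lamHat ω ∈ Λ)
    (hlamHatIn : ∀ᵐ ω ∂ℙ, htilde ω (lamHat ω) ≤ α)
    (hInt : Integrable (fun ω => L (Fin.last N) ω (lamHat ω)) ℙ)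
    (hIntφ : ∀ s : ℝ, Integrable (fun ω => φ (L (Fin.last N) ω (lamHat ω) - s)) ℙ) :
    (⨅ s : ℝ, (s + ∫ ω, φ (L (Fin.last N) ω (lamHat ω) - s) ∂ℙ)) ≤ α := by
  set f : ℝ → ℝ := fun x => t + φ (x - t)
  have hf : Monotone f := fun x y hxy =>
    (add_le_add_iff_left t).2 (hφmono (sub_le_sub_right hxy t))
  have hfc : Continuous f :=
    continuous_const.add (hφconv.locallyLipschitz.continuous.comp (continuous_sub_right t))
  have hLm : Measurable fun ω i => L i ω := measurable_pi_lambda _ hLmeas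
  have hW : Exchangeable (fun ω i => f ∘ L i ω) ℙ := Exchangeable.comp hLm hExch (by fun_prop)
  have hscore : ∀ᵐ ω ∂ℙ, ConformalRisk.heldOutScore (f ∘ B) (fun i => f ∘ L i ω)
      (Fin.last N) (lamHat ω) ≤ Fintype.card (Fin (N + 1)) * α := by
    filter_upwards [hlamHatIn] with ω h
    rw [ConformalRisk.heldOutScore_last, Fintype.card_fin, Nat.cast_add_one,
      ← div_le_iff₀' (by positivity)]
    exact (hdef ω (lamHat ω)).symm.trans_le h
  refine (oceRisk_le_integral hφsub hInt hIntφ t).trans <|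
    hW.integral_le_of_heldOutScore_le (by fun_prop)
      (Metric.isCompact_of_isClosed_isBounded hΛclosed hΛbdd) hMin (hf.comp_monotoneOn hBmono)
      ?_ ?_ hlamHatΛ ?_ hscore ((integrable_const t).add (hIntφ t))
  · filter_upwards [ae_all_iff.2 hLmono] with ω h i using hf.comp_monotoneOn (h i)
  · filter_upwards [ae_all_iff.2 hLB] with ω h i x hx using hf (h i x hx)
  · filter_upwards [hLleftCont (Fin.last N), hlamHatΛ] with ω h hω
    exact hfc.continuousAt.comp_continuousWithinAt (h _ hω)

/-- **Conformal OCE risk control (generic guarantee), Theorem 3.3.**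
Let `φ : ℝ → ℝ` be a real-valued OCE disutility function (nondecreasing, convex,
lower semicontinuous, `φ 0 = 0`, `1 ∈ ∂φ(0)` i.e. `x ≤ φ x`), with associated OCE risk
measure `R[X] = ⨅ s, (s + E[φ(X - s)])`.  With
`h̃_t ω λ = ((t + φ(B λ - t)) + ∑_{i<N} (t + φ(L i ω λ - t))) / (N+1)`, any measurable
`lamHat` taking values in `Λ` with `h̃_t ω (lamHat ω) ≤ α` a.s. satisfies
`R[L_{N+1}(lamHat)] ≤ α`. -/
theorem stmt_2
    {Ω : Type*} [MeasurableSpace Ω] (ℙ : Measure Ω) [IsProbabilityMeasure ℙ]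
    (N : ℕ) (hN : 0 < N)
    (Λ : Set ℝ) (hΛne : Λ.Nonempty) (hΛclosed : IsClosed Λ)
    (hΛbdd : Bornology.IsBounded Λ)
    (lamMin : ℝ) (hMin : IsLeast Λ lamMin)
    (L : Fin (N + 1) → Ω → ℝ → ℝ)
    (hLmeas : ∀ i, Measurable fun ω => L i ω)
    (hExch : ∀ σ : Equiv.Perm (Fin (N + 1)),
      Measure.map (fun ω => fun i => L (σ i) ω) ℙ
        = Measure.map (fun ω => fun i => L i ω) ℙ)
    (hLleftCont : ∀ i, ∀ᵐ ω ∂ℙ, ∀ lam ∈ Λ,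
      ContinuousWithinAt (L i ω) (Λ ∩ Iic lam) lam)
    (hLmono : ∀ i, ∀ᵐ ω ∂ℙ, MonotoneOn (L i ω) Λ)
    (B : ℝ → ℝ)
    (hBleftCont : ∀ lam ∈ Λ, ContinuousWithinAt B (Λ ∩ Iic lam) lam)
    (hBmono : MonotoneOn B Λ)
    (hLB : ∀ i, ∀ᵐ ω ∂ℙ, ∀ lam ∈ Λ, L i ω lam ≤ B lam)
    (φ : ℝ → ℝ)
    (hφmono : Monotone φ) (hφconv : ConvexOn ℝ univ φ)
    (hφlsc : LowerSemicontinuous φ) (hφ0 : φ 0 = 0) (hφsub : ∀ x : ℝ, x ≤ φ x)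
    (α t : ℝ)
    (htilde : Ω → ℝ → ℝ)
    (hdef : ∀ ω lam, htilde ω lam =
      ((t + φ (B lam - t)) + ∑ i : Fin N, (t + φ (L i.castSucc ω lam - t))) / (N + 1))
    (lamHat : Ω → ℝ) (hlamHatMeas : Measurable lamHat)
    (hlamHatΛ : ∀ᵐ ω ∂ℙ, lamHat ω ∈ Λ)
    (hlamHatIn : ∀ᵐ ω ∂ℙ, htilde ω (lamHat ω) ≤ α)
    (hInt : Integrable (fun ω => L (Fin.last N) ω (lamHat ω)) ℙ)
    (hIntφ : ∀ s : ℝ, Integrable (fun ω => φ (L (Fin.last N) ω (lamHat ω) - s)) ℙ) :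
    (⨅ s : ℝ, (s + ∫ ω, φ (L (Fin.last N) ω (lamHat ω) - s) ∂ℙ)) ≤ α :=
  stmt_2_general ℙ N Λ hΛclosed hΛbdd lamMin hMin L hLmeas hExch hLleftCont hLmono B hBmono hLB φ
    hφmono hφconv hφsub α t htilde hdef lamHat hlamHatΛ hlamHatIn hInt hIntφ
end

section
/- Let N be a positive integer, Λ ⊂ ℝ a nonempty closed bounded set with minimum λ_min, and L_1, ..., L_{N+1} exchangeable random functions from Λ to ℝ that are almost surely left-continuous and monotone in λ (each L_i may be either nondecreasing or nonincreasing). Let B : Λ → ℝ be left-continuous and monotone with, for each i, almost surely L_i(λ) ≤ B(λ) for all λ ∈ Λ. Fix δ ∈ [0,1), α ∈ ℝ, and t ∈ [B(λ_min), α]. With φ_{CVaR}(x) := (1/(1−δ)) max{x, 0}, define L̃_{i,t}(λ) := t + φ_{CVaR}(L_i(λ) − t), B̃_t(λ) := t + φ_{CVaR}(B(λ) − t), h̃_t(λ) := (1/(N+1)) (B̃_t(λ) + Σ_{i=1}^N L̃_{i,t}(λ)), and Λ̂_t := {λ ∈ Λ : h̃_t(λ) ≤ α}. Then for any measurable random variable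 λ̂ taking values in Λ with λ̂ ∈ Λ̂_t almost surely, CVaR^δ[L_{N+1}(λ̂)] ≤ α, assuming all relevant expectations exist. -/
open MeasureTheory Set

/-- **Conformal CVaR control (Theorem 3.5).**
With exchangeable losses that are a.s. left-continuous and *monotone* (each either
nondecreasing or nonincreasing) on `Λ`, `B` left-continuous and monotone with
`L i ≤ B` a.s. pointwise on `Λ`, `δ ∈ [0,1)`, `t ∈ [B(λ_min), α]`, and
`φ_CVaR(x) = (1-δ)⁻¹ · max x 0`, define
`h̃_t ω λ = ((t + φ_CVaR(B λ - t)) + ∑_{i<N} (t + φ_CVaR(L i ω λ - t)))/(N+1)`.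
Any measurable `lamHat` valued in `Λ` with `h̃_t ω (lamHat ω) ≤ α` a.s. satisfies
`CVaR^δ[L_{N+1}(lamHat)] = ⨅ s, (s + (1-δ)⁻¹ E[max (L_{N+1}(lamHat) - s) 0]) ≤ α`. -/
theorem stmt_4
    {Ω : Type*} [MeasurableSpace Ω] (ℙ : Measure Ω) [IsProbabilityMeasure ℙ]
    (N : ℕ) (hN : 0 < N)
    (Λ : Set ℝ) (hΛne : Λ.Nonempty) (hΛclosed : IsClosed Λ)
    (hΛbdd : Bornology.IsBounded Λ)
    (lamMin : ℝ) (hMin : IsLeast Λ lamMin)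
    (L : Fin (N + 1) → Ω → ℝ → ℝ)
    (hLmeas : ∀ i, Measurable fun ω => L i ω)
    (hExch : ∀ σ : Equiv.Perm (Fin (N + 1)),
      Measure.map (fun ω => fun i => L (σ i) ω) ℙ
        = Measure.map (fun ω => fun i => L i ω) ℙ)
    (hLleftCont : ∀ i, ∀ᵐ ω ∂ℙ, ∀ lam ∈ Λ,
      ContinuousWithinAt (L i ω) (Λ ∩ Iic lam) lam)
    (hLmono : ∀ i, ∀ᵐ ω ∂ℙ, MonotoneOn (L i ω) Λ ∨ AntitoneOn (L i ω) Λ)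
    (B : ℝ → ℝ)
    (hBleftCont : ∀ lam ∈ Λ, ContinuousWithinAt B (Λ ∩ Iic lam) lam)
    (hBmono : MonotoneOn B Λ ∨ AntitoneOn B Λ)
    (hLB : ∀ i, ∀ᵐ ω ∂ℙ, ∀ lam ∈ Λ, L i ω lam ≤ B lam)
    (δ : ℝ) (hδ : δ ∈ Ico (0:ℝ) 1)
    (α t : ℝ) (ht : t ∈ Icc (B lamMin) α)
    (htilde : Ω → ℝ → ℝ)
    (hdef : ∀ ω lam, htilde ω lam =
      ((t + (1 - δ)⁻¹ * max (B lam - t) 0)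
        + ∑ i : Fin N, (t + (1 - δ)⁻¹ * max (L i.castSucc ω lam - t) 0)) / (N + 1))
    (lamHat : Ω → ℝ) (hlamHatMeas : Measurable lamHat)
    (hlamHatΛ : ∀ᵐ ω ∂ℙ, lamHat ω ∈ Λ)
    (hlamHatIn : ∀ᵐ ω ∂ℙ, htilde ω (lamHat ω) ≤ α)
    (hInt : Integrable (fun ω => L (Fin.last N) ω (lamHat ω)) ℙ)
    (hIntPos : ∀ s : ℝ,
      Integrable (fun ω => max (L (Fin.last N) ω (lamHat ω) - s) 0) ℙ) :
    (⨅ s : ℝ,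
      (s + (1 - δ)⁻¹ * ∫ ω, max (L (Fin.last N) ω (lamHat ω) - s) 0 ∂ℙ)) ≤ α := by
  classical
  obtain ⟨hδ0, hδ1⟩ := hδ
  obtain ⟨hBt, htα⟩ := ht
  have hδpos : (0:ℝ) < 1 - δ := by linarith
  set r : ℝ := (1 - δ)⁻¹ with hr_def
  have hr1 : (1:ℝ) ≤ r := by
    rw [hr_def]
    rw [le_inv_comm₀ one_pos hδpos]
    simpa using hδ0
  have hr0 : (0:ℝ) ≤ r := le_trans zero_le_one hr1
  -- the CVaR transform
  set T : ℝ → ℝ := fun x => t + r * max (x - t) 0 with hT_def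
  have hT_t : ∀ x, t ≤ T x := by
    intro x
    have : 0 ≤ r * max (x - t) 0 := mul_nonneg hr0 (le_max_right _ _)
    simp only [hT_def]; linarith
  have hT_const : ∀ x, x ≤ t → T x = t := by
    intro x hx
    simp only [hT_def]
    rw [max_eq_right (by linarith)]
    ring
  have hT_mono : Monotone T := by
    intro a b hab
    simp only [hT_def]
    have : max (a - t) 0 ≤ max (b - t) 0 :=
      max_le_max (by linarith) le_rfl
    nlinarith
  have hT_ge : ∀ x, x ≤ T x := by
    intro x
    rcases le_total x t with h | h
    · exact le_trans h (le_of_eq (hT_const x h).symm)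
    · simp only [hT_def]
      rw [max_eq_left (by linarith)]
      nlinarith
  have hT_cont : Continuous T := by
    simp only [hT_def]
    fun_prop
  set c : ℝ := ((N:ℝ) + 1) * α with hc_def
  set K : ℝ := c - (N:ℝ) * t with hK_def
  have htK : t ≤ K := by
    simp only [hK_def, hc_def]
    nlinarith [Nat.cast_nonneg (α := ℝ) N]
  have hΛbb : BddBelow Λ := hΛbdd.bddBelow
  -- countable skeleton of Λ approximating every point from the left (or equal)
  set e : ℚ → ℝ := fun p =>
    if h : (Λ ∩ Ici (p:ℝ)).Nonempty then sInf (Λ ∩ Ici (p:ℝ)) else lamMin with he_def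
  have heΛ : ∀ p, e p ∈ Λ := by
    intro p
    simp only [he_def]
    split_ifs with h
    · exact ((hΛclosed.inter isClosed_Ici).csInf_mem h
        (hΛbb.mono inter_subset_left)).1
    · exact hMin.1
  have he_approx : ∀ lam ∈ Λ, ∀ ε > 0, ∃ p : ℚ, lam - ε < e p ∧ e p ≤ lam := by
    intro lam hlam ε hε
    obtain ⟨p, hp1, hp2⟩ := exists_rat_btwn (show lam - ε < lam by linarith)
    refine ⟨p, ?_, ?_⟩
    · have hne : (Λ ∩ Ici (p:ℝ)).Nonempty := ⟨lam, hlam, le_of_lt hp2⟩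
      have : (p:ℝ) ≤ e p := by
        simp only [he_def, dif_pos hne]
        exact le_csInf hne (fun x hx => hx.2)
      linarith
    · have hne : (Λ ∩ Ici (p:ℝ)).Nonempty := ⟨lam, hlam, le_of_lt hp2⟩
      simp only [he_def, dif_pos hne]
      exact csInf_le (hΛbb.mono inter_subset_left) ⟨hlam, le_of_lt hp2⟩
  -- the vector of losses
  set vec : Ω → (Fin (N + 1) → ℝ → ℝ) := fun ω i => L i ω with hvec_def
  have hvec_meas : Measurable vec := measurable_pi_lambda _ (fun i => hLmeas i)
  -- feasibility functional and the symmetrized suprema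
  set g : Fin (N + 1) → (Fin (N + 1) → ℝ → ℝ) → ℝ → ℝ :=
    fun j f lam => T (B lam) + ∑ i ∈ Finset.univ.erase j, T (f i lam) with hg_def
  set ψ : Fin (N + 1) → (Fin (N + 1) → ℝ → ℝ) → ℚ → ℝ :=
    fun j f p => if g j f (e p) ≤ c then min (T (f j (e p))) K else t with hψ_def
  set X : Fin (N + 1) → (Fin (N + 1) → ℝ → ℝ) → ℝ :=
    fun j f => ⨆ p : ℚ, ψ j f p with hX_def
  have hψ_lb : ∀ j f p, t ≤ ψ j f p := by
    intro j f p
    simp only [hψ_def]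
    split_ifs with h
    · exact le_min (hT_t _) htK
    · exact le_rfl
  have hψ_ub : ∀ j f p, ψ j f p ≤ K := by
    intro j f p
    simp only [hψ_def]
    split_ifs with h
    · exact min_le_right _ _
    · exact htK
  have hX_bdd : ∀ j f, BddAbove (Set.range fun p => ψ j f p) := by
    intro j f
    exact ⟨K, by rintro x ⟨p, rfl⟩; exact hψ_ub j f p⟩
  have hX_lb : ∀ j f, t ≤ X j f := by
    intro j f
    exact le_trans (hψ_lb j f 0) (le_ciSup (hX_bdd j f) 0)
  have hX_ub : ∀ j f, X j f ≤ K := by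
    intro j f
    exact ciSup_le (fun p => hψ_ub j f p)
  -- measurability of X j on the product space
  have hX_meas : ∀ j, Measurable (X j) := by
    intro j
    apply Measurable.iSup
    intro p
    have hev : ∀ i : Fin (N+1), Measurable fun f : Fin (N+1) → ℝ → ℝ => f i (e p) :=
      fun i => (measurable_pi_apply (e p)).comp (measurable_pi_apply i)
    have hgm : Measurable fun f => g j f (e p) := by
      simp only [hg_def]
      exact measurable_const.add
        (Finset.measurable_sum _ (fun i _ => hT_cont.measurable.comp (hev i)))
    exact Measurable.ite (measurableSet_le hgm measurable_const)
      ((hT_cont.measurable.comp (hev j)).min measurable_const) measurable_const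
  -- equivariance under permutations
  have hX_perm : ∀ (σ : Equiv.Perm (Fin (N+1))) (j : Fin (N+1)) (f : Fin (N+1) → ℝ → ℝ),
      X j (fun i => f (σ i)) = X (σ j) f := by
    intro σ j f
    simp only [hX_def]
    congr 1
    funext p
    have hsum : ∑ i ∈ Finset.univ.erase j, T (f (σ i) (e p))
        = ∑ i ∈ Finset.univ.erase (σ j), T (f i (e p)) := by
      refine Finset.sum_equiv σ ?_ ?_
      · intro i
        simp [Finset.mem_erase, EmbeddingLike.apply_eq_iff_eq]
      · intro i _; rfl
    simp only [hψ_def, hg_def, hsum]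
  -- all X j have equal integrals by exchangeability
  have hX_int : ∀ j, Integrable (fun ω => X j (vec ω)) ℙ := by
    intro j
    refine ⟨((hX_meas j).comp hvec_meas).aestronglyMeasurable, ?_⟩
    apply HasFiniteIntegral.of_bounded (C := max |t| |K|)
    filter_upwards with ω
    rw [Real.norm_eq_abs, abs_le]
    constructor
    · have := hX_lb j (vec ω)
      have h1 : -(max |t| |K|) ≤ -|t| := by
        simp only [neg_le_neg_iff]; exact le_max_left _ _
      have h2 : -|t| ≤ t := neg_abs_le t
      linarith
    · have := hX_ub j (vec ω)
      have : X j (vec ω) ≤ |K| := le_trans this (le_abs_self K)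
      exact le_trans this (le_max_right _ _)
  have hEX : ∀ j, ∫ ω, X j (vec ω) ∂ℙ = ∫ ω, X (Fin.last N) (vec ω) ∂ℙ := by
    intro j
    set σ : Equiv.Perm (Fin (N+1)) := Equiv.swap j (Fin.last N) with hσ_def
    have hperm_meas : Measurable (fun ω => fun i => L (σ i) ω) :=
      measurable_pi_lambda _ (fun i => hLmeas (σ i))
    have h1 : ∀ ω, X j (vec ω) = X (Fin.last N) (fun i => L (σ i) ω) := by
      intro ω
      have := hX_perm σ (Fin.last N) (vec ω)
      rw [hσ_def] at this ⊢
      rw [Equiv.swap_apply_right] at this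
      exact this.symm
    calc ∫ ω, X j (vec ω) ∂ℙ
        = ∫ ω, X (Fin.last N) ((fun ω => fun i => L (σ i) ω) ω) ∂ℙ := by
          simp only [h1]
      _ = ∫ f, X (Fin.last N) f ∂(Measure.map (fun ω => fun i => L (σ i) ω) ℙ) :=
          (integral_map hperm_meas.aemeasurable
            (hX_meas (Fin.last N)).aestronglyMeasurable).symm
      _ = ∫ f, X (Fin.last N) f ∂(Measure.map vec ℙ) := by rw [hExch σ]
      _ = ∫ ω, X (Fin.last N) (vec ω) ∂ℙ :=
          integral_map hvec_meas.aemeasurable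
            (hX_meas (Fin.last N)).aestronglyMeasurable
  clear_value r T c K e vec g ψ X
  have hvecL : ∀ (ω : Ω) (i : Fin (N+1)), vec ω i = L i ω := by
    intro ω i; rw [hvec_def]
  -- pointwise facts on the good event
  have hgood : ∀ᵐ ω ∂ℙ,
      (∀ i, MonotoneOn (L i ω) Λ ∨ AntitoneOn (L i ω) Λ) ∧
      (∀ i, ∀ lam ∈ Λ, ContinuousWithinAt (L i ω) (Λ ∩ Iic lam) lam) ∧
      (∀ i, ∀ lam ∈ Λ, L i ω lam ≤ B lam) ∧
      lamHat ω ∈ Λ ∧ htilde ω (lamHat ω) ≤ α := by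
    filter_upwards [ae_all_iff.2 hLmono, ae_all_iff.2 hLleftCont,
      ae_all_iff.2 hLB, hlamHatΛ, hlamHatIn] with ω h1 h2 h3 h4 h5
    exact ⟨h1, h2, h3, h4, h5⟩
  -- key a.e. bounds
  have hKey : ∀ᵐ ω ∂ℙ,
      T (L (Fin.last N) ω (lamHat ω)) ≤ X (Fin.last N) (vec ω) ∧
      ∑ j, X j (vec ω) ≤ c := by
    filter_upwards [hgood] with ω hω
    obtain ⟨hmono, hcont, hLBω, hlamL, hlamA⟩ := hω
    -- each T ∘ L i is nondecreasing on Λ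
    have hTmono : ∀ i, ∀ a ∈ Λ, ∀ b ∈ Λ, a ≤ b → T (L i ω a) ≤ T (L i ω b) := by
      intro i a ha b hb hab
      rcases hmono i with h | h
      · exact hT_mono (h ha hb hab)
      · have hca : T (L i ω a) = t := by
          apply hT_const
          calc L i ω a ≤ L i ω lamMin := h hMin.1 ha (hMin.2 ha)
            _ ≤ B lamMin := hLBω i lamMin hMin.1
            _ ≤ t := hBt
        have hcb : T (L i ω b) = t := by
          apply hT_const
          calc L i ω b ≤ L i ω lamMin := h hMin.1 hb (hMin.2 hb)
            _ ≤ B lamMin := hLBω i lamMin hMin.1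
            _ ≤ t := hBt
        rw [hca, hcb]
    have hTBmono : ∀ a ∈ Λ, ∀ b ∈ Λ, a ≤ b → T (B a) ≤ T (B b) := by
      intro a ha b hb hab
      rcases hBmono with h | h
      · exact hT_mono (h ha hb hab)
      · have hca : T (B a) = t := hT_const _ (le_trans (h hMin.1 ha (hMin.2 ha)) hBt)
        have hcb : T (B b) = t := hT_const _ (le_trans (h hMin.1 hb (hMin.2 hb)) hBt)
        rw [hca, hcb]
    have hg_mono : ∀ j, ∀ a ∈ Λ, ∀ b ∈ Λ, a ≤ b → g j (vec ω) a ≤ g j (vec ω) b := by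
      intro j a ha b hb hab
      simp only [hg_def, hvecL]
      exact add_le_add (hTBmono a ha b hb hab)
        (Finset.sum_le_sum (fun i _ => hTmono i a ha b hb hab))
    have hcard : ∀ j : Fin (N+1), (Finset.univ.erase j).card = N := by
      intro j
      rw [Finset.card_erase_of_mem (Finset.mem_univ j)]
      simp
    have hg_min : ∀ j, g j (vec ω) lamMin ≤ c := by
      intro j
      simp only [hg_def, hvecL]
      have h1 : T (B lamMin) = t := hT_const _ hBt
      have h2 : ∀ i ∈ Finset.univ.erase j, T (L i ω lamMin) = t := by
        intro i _
        exact hT_const _ (le_trans (hLBω i lamMin hMin.1) hBt)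
      rw [h1, Finset.sum_congr rfl h2, Finset.sum_const, hcard j]
      simp only [nsmul_eq_mul, hc_def]
      nlinarith [Nat.cast_nonneg (α := ℝ) N]
    have hfeas_le : ∀ j, ∀ lam ∈ Λ, g j (vec ω) lam ≤ c → T (L j ω lam) ≤ K := by
      intro j lam hlam hfeas
      have h1 : T (L j ω lam) ≤ T (B lam) := hT_mono (hLBω j lam hlam)
      have h2 : (N:ℝ) * t ≤ ∑ i ∈ Finset.univ.erase j, T (L i ω lam) := by
        have := Finset.card_nsmul_le_sum (Finset.univ.erase j)
          (fun i => T (L i ω lam)) t (fun i _ => hT_t _)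
        rw [hcard j] at this
        simpa [nsmul_eq_mul] using this
      simp only [hg_def, hvecL] at hfeas
      simp only [hK_def]
      linarith
    constructor
    · -- T (L last (lamHat ω)) ≤ X last (vec ω)
      set lam0 : ℝ := lamHat ω with hlam0_def
      have hfeasl : g (Fin.last N) (vec ω) lam0 ≤ c := by
        have h0 := hlamA
        rw [hdef] at h0
        rw [div_le_iff₀ (by positivity : (0:ℝ) < (N:ℝ) + 1)] at h0
        have hsum : ∑ i ∈ Finset.univ.erase (Fin.last N), T (L i ω lam0)
            = ∑ i : Fin N, T (L i.castSucc ω lam0) := by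
          have h1 := Fin.sum_univ_castSucc (f := fun i => T (L i ω lam0))
          have h2 := Finset.sum_erase_add Finset.univ
            (fun i => T (L i ω lam0)) (Finset.mem_univ (Fin.last N))
          linarith
        simp only [hg_def, hvecL]
        rw [hsum]
        simp only [hT_def]
        calc (t + r * max (B lam0 - t) 0)
              + ∑ i : Fin N, (t + r * max (L i.castSucc ω lam0 - t) 0)
            ≤ α * ((N:ℝ) + 1) := h0
          _ = c := by rw [hc_def]; ring
      apply le_of_forall_pos_le_add
      intro ε hε
      have hcl : ContinuousWithinAt (fun lam => T (L (Fin.last N) ω lam))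
          (Λ ∩ Iic lam0) lam0 :=
        hT_cont.continuousAt.comp_continuousWithinAt (hcont (Fin.last N) lam0 hlamL)
      rw [Metric.continuousWithinAt_iff] at hcl
      obtain ⟨d, hd0, hd⟩ := hcl ε hε
      obtain ⟨p, hp1, hp2⟩ := he_approx lam0 hlamL d hd0
      have hepΛ : e p ∈ Λ := heΛ p
      have hdist : dist (e p) lam0 < d := by
        rw [Real.dist_eq, abs_lt]
        constructor <;> linarith
      have hvals := hd ⟨hepΛ, hp2⟩ hdist
      rw [Real.dist_eq, abs_lt] at hvals
      have hfeasp : g (Fin.last N) (vec ω) (e p) ≤ c :=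
        le_trans (hg_mono (Fin.last N) (e p) hepΛ lam0 hlamL hp2) hfeasl
      have hψval : ψ (Fin.last N) (vec ω) p = T (L (Fin.last N) ω (e p)) := by
        simp only [hψ_def, if_pos hfeasp, hvecL]
        rw [min_eq_left]
        exact hfeas_le (Fin.last N) (e p) hepΛ hfeasp
      have hle : T (L (Fin.last N) ω (e p)) ≤ X (Fin.last N) (vec ω) := by
        rw [← hψval, hX_def]
        exact le_ciSup (hX_bdd (Fin.last N) (vec ω)) p
      linarith [hvals.1]
    · -- sum bound
      apply le_of_forall_pos_le_add
      intro ε hε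
      have hε' : (0:ℝ) < ε / ((N:ℝ) + 1) := by positivity
      have hwit : ∀ j : Fin (N+1), ∃ μ : ℝ, μ ∈ Λ ∧ g j (vec ω) μ ≤ c ∧
          X j (vec ω) ≤ T (L j ω μ) + ε / ((N:ℝ) + 1) := by
        intro j
        have hlt : X j (vec ω) - ε / ((N:ℝ) + 1) < ⨆ p : ℚ, ψ j (vec ω) p := by
          simp only [hX_def]; linarith [hX_lb j (vec ω)]
        obtain ⟨p, hp⟩ := exists_lt_of_lt_ciSup hlt
        by_cases hfeas : g j (vec ω) (e p) ≤ c
        · refine ⟨e p, heΛ p, hfeas, ?_⟩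
          have : ψ j (vec ω) p ≤ T (L j ω (e p)) := by
            simp only [hψ_def, if_pos hfeas, hvecL]
            exact min_le_left _ _
          linarith only [hp, this]
        · refine ⟨lamMin, hMin.1, hg_min j, ?_⟩
          have : ψ j (vec ω) p = t := by simp only [hψ_def, if_neg hfeas]
          have hTl : T (L j ω lamMin) = t :=
            hT_const _ (le_trans (hLBω j lamMin hMin.1) hBt)
          rw [hTl]
          linarith only [hp, this]
      choose μ hμΛ hμfeas hμX using hwit
      obtain ⟨j₀, _, hj₀⟩ := Finset.exists_max_image Finset.univ μ ⟨Fin.last N, Finset.mem_univ _⟩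
      calc ∑ j, X j (vec ω)
          ≤ ∑ j : Fin (N+1), (T (L j ω (μ j₀)) + ε / ((N:ℝ) + 1)) := by
            apply Finset.sum_le_sum
            intro j _
            have h1 := hμX j
            have h2 : T (L j ω (μ j)) ≤ T (L j ω (μ j₀)) :=
              hTmono j (μ j) (hμΛ j) (μ j₀) (hμΛ j₀) (hj₀ j (Finset.mem_univ j))
            linarith only [h1, h2]
        _ = (∑ j : Fin (N+1), T (L j ω (μ j₀))) + ε := by
            rw [Finset.sum_add_distrib, Finset.sum_const]
            congr 1
            simp only [Finset.card_univ, Fintype.card_fin, nsmul_eq_mul]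
            push_cast
            field_simp
        _ ≤ c + ε := by
            have hsplit : (∑ i ∈ Finset.univ.erase j₀, T (L i ω (μ j₀)))
                + T (L j₀ ω (μ j₀)) = ∑ j : Fin (N+1), T (L j ω (μ j₀)) :=
              Finset.sum_erase_add Finset.univ _ (Finset.mem_univ j₀)
            have h1 : T (L j₀ ω (μ j₀)) ≤ T (B (μ j₀)) :=
              hT_mono (hLBω j₀ (μ j₀) (hμΛ j₀))
            have h2 := hμfeas j₀
            simp only [hg_def, hvecL] at h2
            linarith only [hsplit, h1, h2]
  -- integrate
  have hIntT : Integrable (fun ω => T (L (Fin.last N) ω (lamHat ω))) ℙ := by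
    simp only [hT_def]
    exact (integrable_const t).add ((hIntPos t).const_mul r)
  have h3 : ∫ ω, T (L (Fin.last N) ω (lamHat ω)) ∂ℙ
      ≤ ∫ ω, X (Fin.last N) (vec ω) ∂ℙ := by
    apply integral_mono_ae hIntT (hX_int (Fin.last N))
    filter_upwards [hKey] with ω hω
    exact hω.1
  have h4 : ∫ ω, X (Fin.last N) (vec ω) ∂ℙ ≤ α := by
    have hsumInt : Integrable (fun ω => ∑ j, X j (vec ω)) ℙ :=
      integrable_finset_sum _ (fun j _ => hX_int j)
    have h5 : ∫ ω, (∑ j, X j (vec ω)) ∂ℙ ≤ c := by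
      calc ∫ ω, (∑ j, X j (vec ω)) ∂ℙ ≤ ∫ _, c ∂ℙ := by
            apply integral_mono_ae hsumInt (integrable_const c)
            filter_upwards [hKey] with ω hω
            exact hω.2
        _ = c := by simp
    have h6 : ∫ ω, (∑ j, X j (vec ω)) ∂ℙ
        = ((N:ℝ) + 1) * ∫ ω, X (Fin.last N) (vec ω) ∂ℙ := by
      rw [integral_finset_sum _ (fun j _ => hX_int j)]
      rw [Finset.sum_congr rfl (fun j _ => hEX j)]
      rw [Finset.sum_const]
      simp only [Finset.card_univ, Fintype.card_fin, nsmul_eq_mul]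
      push_cast
      ring
    rw [h6] at h5
    have hN1 : (0:ℝ) < (N:ℝ) + 1 := by positivity
    rw [hc_def] at h5
    exact le_of_mul_le_mul_left h5 hN1
  have h5 : t + r * ∫ ω, max (L (Fin.last N) ω (lamHat ω) - t) 0 ∂ℙ ≤ α := by
    have heq : ∫ ω, T (L (Fin.last N) ω (lamHat ω)) ∂ℙ
        = t + r * ∫ ω, max (L (Fin.last N) ω (lamHat ω) - t) 0 ∂ℙ := by
      simp only [hT_def]
      rw [integral_add (integrable_const t) ((hIntPos t).const_mul r)]
      rw [integral_const_mul]
      simp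
    linarith [le_trans h3 h4, le_of_eq heq]
  -- conclude via the infimum
  have hbdd : BddBelow (Set.range fun s : ℝ =>
      s + r * ∫ ω, max (L (Fin.last N) ω (lamHat ω) - s) 0 ∂ℙ) := by
    refine ⟨∫ ω, L (Fin.last N) ω (lamHat ω) ∂ℙ, ?_⟩
    rintro x ⟨s, rfl⟩
    have hm0 : ∫ ω, (L (Fin.last N) ω (lamHat ω) - s) ∂ℙ
        ≤ ∫ ω, max (L (Fin.last N) ω (lamHat ω) - s) 0 ∂ℙ :=
      integral_mono (hInt.sub (integrable_const s)) (hIntPos s)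
        (fun ω => le_max_left _ _)
    have hm1 : ∫ ω, (L (Fin.last N) ω (lamHat ω) - s) ∂ℙ
        = (∫ ω, L (Fin.last N) ω (lamHat ω) ∂ℙ) - s := by
      rw [integral_sub hInt (integrable_const s)]
      simp
    have hm : ∫ ω, L (Fin.last N) ω (lamHat ω) ∂ℙ - s
        ≤ ∫ ω, max (L (Fin.last N) ω (lamHat ω) - s) 0 ∂ℙ := by
      rw [← hm1]; exact hm0
    have hnn : 0 ≤ ∫ ω, max (L (Fin.last N) ω (lamHat ω) - s) 0 ∂ℙ :=
      integral_nonneg (fun ω => le_max_right _ _)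
    have : (1:ℝ) * ∫ ω, max (L (Fin.last N) ω (lamHat ω) - s) 0 ∂ℙ
        ≤ r * ∫ ω, max (L (Fin.last N) ω (lamHat ω) - s) 0 ∂ℙ :=
      mul_le_mul_of_nonneg_right hr1 hnn
    simp only
    linarith
  exact le_trans (ciInf_le hbdd t) h5
end

section
/- Let N be a positive integer, let s₁, ..., s_N ∈ ℝ, and let α ∈ [1/(N+1), 1) so that k := ⌈(N+1)(1−α)⌉ satisfies 1 ≤ k ≤ N. Let s_{(k)} denote the k-th smallest value among s₁, ..., s_N (counted with multiplicity). Then sup { λ ∈ ℝ : (1/(N+1)) ( 1 + Σ_{i=1}^N 𝟙[s_i > 1 − λ] ) ≤ α } = 1 − s_{(k)}, and moreover the supremum is attained, i.e., λ = 1 − s_{(k)} satisfies (1/(N+1)) ( 1 + Σ_{i=1}^N 𝟙[s_i > 1 − λ] ) ≤ α. -/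
open Set

private lemma orderstat_aux {N k : ℕ} (hk1 : 1 ≤ k) (hkN : k ≤ N)
    (t : Fin N → ℝ) (ht : Monotone t) (x : ℝ) :
    k ≤ (Finset.univ.filter (fun i => t i ≤ x)).card ↔
      t ⟨k - 1, by omega⟩ ≤ x := by
  constructor
  · intro h
    by_contra hx
    push_neg at hx
    have hsub : (Finset.univ.filter (fun i => t i ≤ x)) ⊆
        Finset.Iio (⟨k - 1, by omega⟩ : Fin N) := by
      intro i hi
      simp only [Finset.mem_filter, Finset.mem_univ, true_and] at hi
      rw [Finset.mem_Iio]
      by_contra hge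
      push_neg at hge
      exact absurd (le_trans (ht hge) hi) (not_le.mpr hx)
    have := Finset.card_le_card hsub
    rw [Fin.card_Iio] at this
    simp only [] at this
    omega
  · intro h
    have hsub : Finset.Iic (⟨k - 1, by omega⟩ : Fin N) ⊆
        Finset.univ.filter (fun i => t i ≤ x) := by
      intro i hi
      rw [Finset.mem_Iic] at hi
      simp only [Finset.mem_filter, Finset.mem_univ, true_and]
      exact le_trans (ht hi) h
    have := Finset.card_le_card hsub
    rw [Fin.card_Iic] at this
    simp only [] at this
    omega

/-- **Conformal prediction threshold as an order statistic (Appendix D).**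
For scores `s₁,…,s_N`, `α ∈ [1/(N+1), 1)`, and `k = ⌈(N+1)(1-α)⌉` (which satisfies
`1 ≤ k ≤ N`), letting `s_(k)` be the `k`-th smallest score (obtained via the sorting
permutation `Tuple.sort`), the set
`{λ : (1/(N+1))(1 + ∑_i 𝟙[s_i > 1-λ]) ≤ α}` has supremum `1 - s_(k)`, and the supremum
is attained: `λ = 1 - s_(k)` itself satisfies the inequality. -/
theorem stmt_18
    (N : ℕ) (hN : 0 < N)
    (s : Fin N → ℝ)
    (α : ℝ) (hα : α ∈ Ico (1 / ((N : ℝ) + 1)) 1)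
    (k : ℕ) (hk : k = ⌈((N : ℝ) + 1) * (1 - α)⌉₊)
    (hk1 : 1 ≤ k) (hkN : k ≤ N)
    (sk : ℝ) (hsk : sk = s (Tuple.sort s ⟨k - 1, by omega⟩)) :
    sSup {lam : ℝ |
        (1 / ((N : ℝ) + 1)) * (1 + ∑ i : Fin N, if 1 - lam < s i then (1:ℝ) else 0) ≤ α}
      = 1 - sk
    ∧ (1 / ((N : ℝ) + 1))
        * (1 + ∑ i : Fin N, if 1 - (1 - sk) < s i then (1:ℝ) else 0) ≤ α := by
  obtain ⟨hα1, hα2⟩ := hα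
  have hpos : (0:ℝ) < (N:ℝ) + 1 := by positivity
  have hmono : Monotone (s ∘ Tuple.sort s) := Tuple.monotone_sort s
  -- count under permutation
  have hcardperm : ∀ x : ℝ,
      (Finset.univ.filter (fun i : Fin N => s i ≤ x)).card
      = (Finset.univ.filter (fun i : Fin N => s (Tuple.sort s i) ≤ x)).card := by
    intro x
    rw [← Fintype.card_subtype, ← Fintype.card_subtype]
    exact Fintype.card_congr ((Tuple.sort s).subtypeEquiv (fun i => Iff.rfl)).symm
  have key : ∀ lam : ℝ,
      ((1 / ((N : ℝ) + 1)) * (1 + ∑ i : Fin N, if 1 - lam < s i then (1:ℝ) else 0) ≤ α)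
      ↔ lam ≤ 1 - sk := by
    intro lam
    have hsum : (∑ i : Fin N, if 1 - lam < s i then (1:ℝ) else 0)
        = ((Finset.univ.filter (fun i : Fin N => 1 - lam < s i)).card : ℝ) := by
      rw [Finset.sum_boole]
    set c := (Finset.univ.filter (fun i : Fin N => 1 - lam < s i)).card with hc
    set d := (Finset.univ.filter (fun i : Fin N => s i ≤ 1 - lam)).card with hd
    have hcd : d + c = N := by
      rw [hd, hc]
      have := Finset.card_filter_add_card_filter_not
        (s := (Finset.univ : Finset (Fin N))) (p := fun i : Fin N => s i ≤ 1 - lam)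
      simp only [not_le] at this
      simpa using this
    have hstep1 : ((1 / ((N : ℝ) + 1)) * (1 + (c:ℝ)) ≤ α) ↔ ((N:ℝ) + 1) * (1 - α) ≤ (d:ℝ) := by
      rw [div_mul_eq_mul_div, div_le_iff₀ hpos]
      constructor <;> intro h
      · have : (d:ℝ) = (N:ℝ) - (c:ℝ) := by
          have := hcd; push_cast [← this]; ring
        rw [this]; nlinarith
      · have hdc : (c:ℝ) = (N:ℝ) - (d:ℝ) := by
          have := hcd; push_cast [← this]; ring
        rw [hdc]; nlinarith
    have hstep2 : (((N:ℝ) + 1) * (1 - α) ≤ (d:ℝ)) ↔ k ≤ d := by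
      rw [hk, Nat.ceil_le]
    have hstep3 : k ≤ d ↔ sk ≤ 1 - lam := by
      rw [hd, hcardperm, hsk]
      exact orderstat_aux hk1 hkN (s ∘ Tuple.sort s) hmono (1 - lam)
    rw [hsum, hstep1, hstep2, hstep3]
    constructor <;> intro h <;> linarith
  have hset : {lam : ℝ |
      (1 / ((N : ℝ) + 1)) * (1 + ∑ i : Fin N, if 1 - lam < s i then (1:ℝ) else 0) ≤ α}
      = Iic (1 - sk) := by
    ext lam; exact key lam
  constructor
  · rw [hset, csSup_Iic]
  · exact (key (1 - sk)).mpr le_rfl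
end
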